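/- arXiv:1812.01852 — 4 statements merged into one kernel-verified Lean document; each statement's English description precedes it below -/
import Mathlib

section
/- Let U ∈ ℤ with U ≥ 1 and let x ∈ ℤ with −U < x < U. Suppose v, u ∈ ℤ are binary (v, u ∈ {0, 1}) and satisfy 1 + x ≤ U·v ≤ U + x and 1 − x ≤ U·u ≤ U − x. Then v − u = sign(x), the product v·u equals 1 if x = 0 and 0 otherwise, and 1 − v·u equals 0 if x = 0 and 1 otherwise (i.e., 1 − v·u = bool(x)). -/
/-- Output correctness of the sign/bool gadget: with binary `v, u` recording `x ≥ 0`
and `x ≤ 0` via the gadget inequalities, `v - u = sign x`, `v·u` indicates `x = 0`,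
and `1 - v·u = bool x`. -/
theorem stmt_6 (U x v u : ℤ) (hU : 1 ≤ U) (hx1 : -U < x) (hx2 : x < U)
    (hv : v = 0 ∨ v = 1) (hu : u = 0 ∨ u = 1)
    (h1 : 1 + x ≤ U * v) (h2 : U * v ≤ U + x)
    (h3 : 1 - x ≤ U * u) (h4 : U * u ≤ U - x) :
    v - u = Int.sign x ∧
    (v * u = if x = 0 then 1 else 0) ∧
    (1 - v * u = if x = 0 then 0 else 1) := by
  rcases lt_trichotomy x 0 with h | h | h
  · rw [Int.sign_eq_neg_one_of_neg h]
    rcases hv with rfl | rfl <;> rcases hu with rfl | rfl <;>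
      simp_all <;> omega
  · subst h
    rcases hv with rfl | rfl <;> rcases hu with rfl | rfl <;> simp_all <;> omega
  · rw [Int.sign_eq_one_of_pos h]
    rcases hv with rfl | rfl <;> rcases hu with rfl | rfl <;>
      simp_all <;> omega
end

section
/- Let u, x, z ∈ ℤ with u ≥ 0, 0 ≤ x ≤ u, and z ∈ {0, 1}. Then for all y, y' ∈ ℤ, the three conditions 0 ≤ y ≤ u·z, 0 ≤ y' ≤ u·(1 − z), and y + y' = x hold if and only if y = z·x and y' = (1 − z)·x. In particular, a solution (y, y') always exists, and in every solution y = x and y' = 0 when z = 1, while y = 0 and y' = x when z = 0. -/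
/-- Variable-splitting lemma: for `0 ≤ x ≤ u` and binary `z`, the constraints
`0 ≤ y ≤ u·z`, `0 ≤ y' ≤ u·(1 - z)` and `y + y' = x` hold iff `y = z·x` and
`y' = (1 - z)·x`. -/
theorem stmt_7 (u x z : ℤ) (hu : 0 ≤ u) (hx0 : 0 ≤ x) (hxu : x ≤ u)
    (hz : z = 0 ∨ z = 1) :
    ∀ y y' : ℤ,
      (0 ≤ y ∧ y ≤ u * z ∧ 0 ≤ y' ∧ y' ≤ u * (1 - z) ∧ y + y' = x) ↔
      (y = z * x ∧ y' = (1 - z) * x) := by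
  intro y y'
  rcases hz with rfl | rfl <;> constructor <;> rintro ⟨h1, h2⟩ <;> simp_all <;> omega
end

section
/- Let n, k ≥ 1, let o : Fin n → ℤ satisfy o(i) ≥ 1 for all i, and let B ∈ ℤ. Then the following are equivalent: (1) there exists x : Fin n → Fin k → ℤ such that x(i)(j) ≥ 0 for all i, j; Σ_{j} x(i)(j) = o(i) for every i; for every i the number of indices j with x(i)(j) ≠ 0 is exactly 1; and Σ_{i} x(i)(j) ≤ B for every j. (2) There exists an assignment σ : Fin n → Fin k such that for every j, Σ_{i : σ(i) = j} o(i) ≤ B (i.e., an admissible packing of the items of sizes o(1), …, o(n) into k bins of capacity B). -/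
/-- Correctness of the n-fold IP reduction from Unary Bin Packing: the IP with
constraints (AssignItem), (OneBin) and the capacity constraints is feasible iff
there is an admissible packing of the items into `k` bins of capacity `B`. -/
theorem stmt_10 (n k : ℕ) (hn : 1 ≤ n) (hk : 1 ≤ k) (o : Fin n → ℤ)
    (ho : ∀ i, 1 ≤ o i) (B : ℤ) :
    (∃ x : Fin n → Fin k → ℤ,
      (∀ i j, 0 ≤ x i j) ∧
      (∀ i, ∑ j, x i j = o i) ∧
      (∀ i, (Finset.univ.filter (fun j => x i j ≠ 0)).card = 1) ∧
      (∀ j, ∑ i, x i j ≤ B)) ↔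
    (∃ σ : Fin n → Fin k,
      ∀ j, ∑ i ∈ Finset.univ.filter (fun i => σ i = j), o i ≤ B) := by
  constructor
  · rintro ⟨x, hpos, hsum, hone, hcap⟩
    -- for each i, there is a unique bin
    have h : ∀ i, ∃ a : Fin k, (Finset.univ.filter (fun j => x i j ≠ 0)) = {a} := by
      intro i
      exact Finset.card_eq_one.mp (hone i)
    choose σ hσ using h
    -- x i j = if σ i = j then o i else 0
    have hx : ∀ i j, x i j = if σ i = j then o i else 0 := by
      intro i j
      have hzero : ∀ j', σ i ≠ j' → x i j' = 0 := by
        intro j' hne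
        by_contra hne0
        have : j' ∈ Finset.univ.filter (fun j => x i j ≠ 0) :=
          Finset.mem_filter.mpr ⟨Finset.mem_univ _, hne0⟩
        rw [hσ i] at this
        exact hne (Finset.mem_singleton.mp this).symm
      have hval : x i (σ i) = o i := by
        have := hsum i
        rw [← this]
        rw [Finset.sum_eq_single (σ i)]
        · intro b _ hb
          exact hzero b (Ne.symm hb)
        · intro hb; exact absurd (Finset.mem_univ _) hb
      by_cases hj : σ i = j
      · subst hj; simp [hval]
      · simp [hj, hzero j hj]
    refine ⟨σ, fun j => ?_⟩
    calc ∑ i ∈ Finset.univ.filter (fun i => σ i = j), o i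
        = ∑ i, x i j := by
          rw [Finset.sum_filter]
          apply Finset.sum_congr rfl
          intro i _
          rw [hx i j]
      _ ≤ B := hcap j
  · rintro ⟨σ, hσ⟩
    refine ⟨fun i j => if σ i = j then o i else 0, ?_, ?_, ?_, ?_⟩
    · intro i j
      dsimp only
      split
      · linarith [ho i]
      · exact le_refl 0
    · intro i
      simp
    · intro i
      dsimp only
      have : (Finset.univ.filter (fun j => (if σ i = j then o i else 0) ≠ 0)) = {σ i} := by
        ext j
        simp only [Finset.mem_filter, Finset.mem_univ, true_and, Finset.mem_singleton]
        constructor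
        · intro h
          by_contra hne
          exact h (if_neg (fun h' => hne h'.symm))
        · intro h; subst h
          intro h'
          rw [if_pos rfl] at h'
          linarith [ho i]
      rw [this, Finset.card_singleton]
    · intro j
      dsimp only
      have : ∑ i, (if σ i = j then o i else 0) =
          ∑ i ∈ Finset.univ.filter (fun i => σ i = j), o i := by
        rw [Finset.sum_filter]
      rw [this]
      exact hσ j
end

section
/- Let m ≥ 1 and let w ∈ ℤ with −m < w < m. Suppose the integers v, u, v¬, u¬, z∨, z, s satisfy: v, u, s ∈ {0, 1}; 1 + w ≤ m·v ≤ m + w; 1 − w ≤ m·u ≤ m − w; v¬ = 1 − v; u¬ = 1 − u; 2·z∨ = v¬ + u¬ + s; and z = 1 − z∨. Then z ∈ {0, 1}, and z = 1 if w = 0 while z = 0 if w ≠ 0. Moreover, for every such w a solution (v, u, v¬, u¬, z∨, z, s) exists. -/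
/-- Correctness of the composite gadget implementing `z = ¬bool_m(w)`: the system
consisting of the sign gadget, negations, disjunction with binary slack, and a final
negation forces `z` to be binary with `z = 1` iff `w = 0`; moreover a solution exists. -/
theorem stmt_14 (m : ℕ) (hm : 1 ≤ m) (w : ℤ) (hw1 : -(m : ℤ) < w) (hw2 : w < (m : ℤ)) :
    (∀ v u vneg uneg zor z s : ℤ,
      (v = 0 ∨ v = 1) → (u = 0 ∨ u = 1) → (s = 0 ∨ s = 1) →
      1 + w ≤ (m : ℤ) * v → (m : ℤ) * v ≤ (m : ℤ) + w →
      1 - w ≤ (m : ℤ) * u → (m : ℤ) * u ≤ (m : ℤ) - w →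
      vneg = 1 - v → uneg = 1 - u →
      2 * zor = vneg + uneg + s → z = 1 - zor →
      ((z = 0 ∨ z = 1) ∧ (w = 0 → z = 1) ∧ (w ≠ 0 → z = 0))) ∧
    (∃ v u vneg uneg zor z s : ℤ,
      (v = 0 ∨ v = 1) ∧ (u = 0 ∨ u = 1) ∧ (s = 0 ∨ s = 1) ∧
      1 + w ≤ (m : ℤ) * v ∧ (m : ℤ) * v ≤ (m : ℤ) + w ∧
      1 - w ≤ (m : ℤ) * u ∧ (m : ℤ) * u ≤ (m : ℤ) - w ∧
      vneg = 1 - v ∧ uneg = 1 - u ∧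
      2 * zor = vneg + uneg + s ∧ z = 1 - zor) := by
  have hm' : (1 : ℤ) ≤ m := by exact_mod_cast hm
  constructor
  · intro v u vneg uneg zor z s hv hu hs h1 h2 h3 h4 h5 h6 h7 h8
    rcases hv with rfl | rfl <;> rcases hu with rfl | rfl <;>
      simp only [mul_zero, mul_one] at h1 h2 h3 h4 <;> omega
  · rcases lt_trichotomy w 0 with h | h | h
    · exact ⟨0, 1, 1, 0, 1, 0, 1, by norm_num; constructor <;> omega⟩
    · exact ⟨1, 1, 0, 0, 0, 1, 0, by norm_num; subst h; constructor <;> omega⟩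
    · exact ⟨1, 0, 0, 1, 1, 0, 1, by norm_num; constructor <;> omega⟩
end
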